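/- The two-coordinate convolution NSC2 splits by parity: for f,g : 2^U × 2^U → ℤ, (f ⋄₂ g)(X,Y) = (f'₀ ⋄ g'₀ + f'₀ ⋄ g'₁ + f'₁ ⋄ g'₀ − f'₁ ⋄ g'₁)(X ⊎ Y), where primes denote the encodings on the doubled universe U' = U_X ⊎ U_Y with f'ₚ(X ⊎ Y) = f(X,Y)·[|Y| ≡ p mod 2] and g'_q(X ⊎ Y) = g(X,Y)·[|X| ≡ q mod 2]. -/

import Mathlib

/-- `I A B = (-1)^|{(a,b) ∈ A × B : a > b}|`. -/
def Isgn (A B : Finset ℕ) : ℤ :=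
  (-1) ^ ((A ×ˢ B).filter (fun p => p.2 < p.1)).card

/-- Non-commutative Subset Convolution. -/
def nsc (f g : Finset ℕ → ℤ) (X : Finset ℕ) : ℤ :=
  ∑ A ∈ X.powerset, f A * g (X \ A) * Isgn A (X \ A)

/-- Two-coordinate Non-commutative Subset Convolution (NSC2). -/
def nsc2 (f g : Finset ℕ → Finset ℕ → ℤ) (X Y : Finset ℕ) : ℤ :=
  ∑ A ∈ X.powerset, ∑ C ∈ Y.powerset,
    f A C * g (X \ A) (Y \ C) * Isgn A (X \ A) * Isgn C (Y \ C)

/-- The part of a subset of the doubled universe living in the lower copy `{0,…,n-1}`. -/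
def lowPart (n : ℕ) (Z : Finset ℕ) : Finset ℕ := Z.filter (· < n)

/-- The part living in the upper copy `{n,…,2n-1}`, translated back. -/
def highPart (n : ℕ) (Z : Finset ℕ) : Finset ℕ := (Z.filter (fun a => n ≤ a)).image (· - n)

/-- `f'ₚ(X ⊎ Y) = f(X,Y)·[|Y| ≡ p mod 2]` on the doubled universe. -/
def primeF (n : ℕ) (f : Finset ℕ → Finset ℕ → ℤ) (p : ℕ) (Z : Finset ℕ) : ℤ :=
  if (highPart n Z).card % 2 = p then f (lowPart n Z) (highPart n Z) else 0

/-- `g'_q(X ⊎ Y) = g(X,Y)·[|X| ≡ q mod 2]` on the doubled universe. -/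
def primeG (n : ℕ) (g : Finset ℕ → Finset ℕ → ℤ) (q : ℕ) (Z : Finset ℕ) : ℤ :=
  if (lowPart n Z).card % 2 = q then g (lowPart n Z) (highPart n Z) else 0
/-! Identify a pair `(X, Y)` with `X ∪ (Y + n)` in the doubled universe. Subsets of
`X ∪ (Y + n)` are then exactly the sets `A ∪ (C + n)` with `A ⊆ X`, `C ⊆ Y`, and since every
element of the upper copy exceeds every element of the lower one, the sign of a split factors as
`I(A ∪ (C + n), B ∪ (D + n)) = I(A, B) · I(C, D) · (-1)^(|C| |B|)`. The extra sign is `-1` exactly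
when `|C|` and `|B|` are both odd; the parity indicators in `f'ₚ` and `g'_q` select these cases,
and the minus sign in front of `f'₁ ⋄ g'₁` supplies the extra sign. -/
open Finset

lemma Isgn_union_left {A A' : Finset ℕ} (h : Disjoint A A') (B : Finset ℕ) :
    Isgn (A ∪ A') B = Isgn A B * Isgn A' B := by
  rw [Isgn, Isgn, Isgn, union_product, filter_union,
    card_union_of_disjoint (disjoint_filter_filter (disjoint_product.2 (Or.inl h))), pow_add]

lemma Isgn_union_right (A : Finset ℕ) {B B' : Finset ℕ} (h : Disjoint B B') :
    Isgn A (B ∪ B') = Isgn A B * Isgn A B' := by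
  rw [Isgn, Isgn, Isgn, product_union, filter_union,
    card_union_of_disjoint (disjoint_filter_filter (disjoint_product.2 (Or.inr h))), pow_add]

lemma Isgn_eq_one_of_lt {A B : Finset ℕ} (h : ∀ a ∈ A, ∀ b ∈ B, a < b) : Isgn A B = 1 := by
  rw [Isgn, filter_false_of_mem, card_empty, pow_zero]
  rintro ⟨a, b⟩ hab
  rw [mem_product] at hab
  exact (h a hab.1 b hab.2).asymm

lemma Isgn_eq_neg_one_pow_of_gt {A B : Finset ℕ} (h : ∀ a ∈ A, ∀ b ∈ B, b < a) :
    Isgn A B = (-1) ^ (#A * #B) := by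
  rw [Isgn, filter_true_of_mem, card_product]
  rintro ⟨a, b⟩ hab
  rw [mem_product] at hab
  exact h a hab.1 b hab.2

lemma Isgn_image_of_strictMono {f : ℕ → ℕ} (hf : StrictMono f) (A B : Finset ℕ) :
    Isgn (A.image f) (B.image f) = Isgn A B := by
  rw [Isgn, Isgn, ← prodMap_image_product, filter_image,
    card_image_of_injective _ (hf.injective.prodMap hf.injective)]
  simp only [Prod.map_fst, Prod.map_snd, hf.lt_iff_lt]

variable {n : ℕ}

lemma lt_of_mem_of_mem_image_add {A C : Finset ℕ} (hA : A ⊆ range n) {a c : ℕ} (ha : a ∈ A)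
    (hc : c ∈ C.image (· + n)) : a < c := by
  obtain ⟨c, -, rfl⟩ := mem_image.1 hc
  have := mem_range.1 (hA ha)
  omega

lemma disjoint_image_add {A : Finset ℕ} (hA : A ⊆ range n) (C : Finset ℕ) :
    Disjoint A (C.image (· + n)) :=
  disjoint_left.2 fun _ ha hc => (lt_of_mem_of_mem_image_add hA ha hc).false

lemma Isgn_union_image_add {A B : Finset ℕ} (hA : A ⊆ range n) (hB : B ⊆ range n)
    (C D : Finset ℕ) :
    Isgn (A ∪ C.image (· + n)) (B ∪ D.image (· + n)) = Isgn A B * Isgn C D * (-1) ^ (#C * #B) := by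
  rw [Isgn_union_left (disjoint_image_add hA C), Isgn_union_right _ (disjoint_image_add hB D),
    Isgn_union_right _ (disjoint_image_add hB D),
    Isgn_eq_one_of_lt fun a ha d hd => lt_of_mem_of_mem_image_add hA ha hd,
    Isgn_eq_neg_one_pow_of_gt fun c hc b hb => lt_of_mem_of_mem_image_add hB hb hc,
    Isgn_image_of_strictMono (add_left_strictMono), card_image_of_injective _ (add_left_injective n)]
  ring

lemma lowPart_union_image_add {A : Finset ℕ} (hA : A ⊆ range n) (C : Finset ℕ) :
    lowPart n (A ∪ C.image (· + n)) = A := by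
  rw [lowPart, filter_union, filter_true_of_mem fun a ha => mem_range.1 (hA ha),
    filter_false_of_mem fun c hc => by obtain ⟨c, -, rfl⟩ := mem_image.1 hc; omega, union_empty]

lemma highPart_union_image_add {A : Finset ℕ} (hA : A ⊆ range n) (C : Finset ℕ) :
    highPart n (A ∪ C.image (· + n)) = C := by
  rw [highPart, filter_union, filter_false_of_mem fun a ha => by have := mem_range.1 (hA ha); omega,
    filter_true_of_mem fun c hc => by obtain ⟨c, -, rfl⟩ := mem_image.1 hc; omega, empty_union,
    image_image]
  simp [Function.comp_def]

lemma lowPart_union_image_highPart (Z : Finset ℕ) :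
    lowPart n Z ∪ (highPart n Z).image (· + n) = Z := by
  rw [lowPart, highPart, image_image, Function.comp_def,
    image_congr (f := fun a => a - n + n) (g := id) fun a ha => Nat.sub_add_cancel (mem_filter.1 ha).2,
    image_id]
  simp_rw [← not_lt]
  exact filter_union_filter_not_eq _ Z

lemma union_image_add_sdiff {X Y A C : Finset ℕ} (hX : X ⊆ range n) (hA : A ⊆ X) :
    (X ∪ Y.image (· + n)) \ (A ∪ C.image (· + n)) = (X \ A) ∪ (Y \ C).image (· + n) := by
  rw [image_sdiff _ _ (add_left_injective n)]
  have := disjoint_image_add hX Y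
  have := disjoint_image_add hX C
  have := disjoint_image_add (hA.trans hX) Y
  ext a
  simp only [mem_union, mem_sdiff, disjoint_left] at *
  grind

lemma sum_powerset_union_image_add {M : Type*} [AddCommMonoid M] {X : Finset ℕ}
    (hX : X ⊆ range n) (Y : Finset ℕ) (F : Finset ℕ → M) :
    ∑ Z ∈ (X ∪ Y.image (· + n)).powerset, F Z
      = ∑ A ∈ X.powerset, ∑ C ∈ Y.powerset, F (A ∪ C.image (· + n)) := by
  rw [← sum_product']
  refine sum_nbij' (fun Z => (lowPart n Z, highPart n Z)) (fun p => p.1 ∪ p.2.image (· + n))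
    (fun Z hZ => ?_) (fun p hp => ?_) (fun Z _ => lowPart_union_image_highPart Z) (fun p hp => ?_)
    (fun Z _ => by rw [lowPart_union_image_highPart])
  · rw [mem_powerset] at hZ
    have hlow : lowPart n Z ⊆ lowPart n (X ∪ Y.image (· + n)) := filter_subset_filter _ hZ
    have hhigh : highPart n Z ⊆ highPart n (X ∪ Y.image (· + n)) :=
      image_subset_image (filter_subset_filter _ hZ)
    rw [lowPart_union_image_add hX] at hlow
    rw [highPart_union_image_add hX] at hhigh
    exact mem_product.2 ⟨mem_powerset.2 hlow, mem_powerset.2 hhigh⟩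
  · rw [mem_product, mem_powerset, mem_powerset] at hp
    exact mem_powerset.2 (union_subset_union hp.1 (image_subset_image hp.2))
  · rw [mem_product, mem_powerset] at hp
    rw [lowPart_union_image_add (hp.1.trans hX), highPart_union_image_add (hp.1.trans hX)]

lemma parity_split_mul_neg_one_pow (a b : ℤ) (c d : ℕ) :
    ((if c % 2 = 0 then a else 0) * (if d % 2 = 0 then b else 0)
      + (if c % 2 = 0 then a else 0) * (if d % 2 = 1 then b else 0)
      + (if c % 2 = 1 then a else 0) * (if d % 2 = 0 then b else 0)
      - (if c % 2 = 1 then a else 0) * (if d % 2 = 1 then b else 0)) * (-1) ^ (c * d) = a * b := by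
  rw [neg_one_pow_eq_pow_mod_two, Nat.mul_mod]
  rcases Nat.mod_two_eq_zero_or_one c with hc | hc <;>
    rcases Nat.mod_two_eq_zero_or_one d with hd | hd <;> simp [hc, hd]

theorem nsc2_parity_split_general (n : ℕ) (f g : Finset ℕ → Finset ℕ → ℤ)
    (X Y : Finset ℕ) (hX : X ⊆ Finset.range n) :
    nsc2 f g X Y =
      nsc (primeF n f 0) (primeG n g 0) (X ∪ Y.image (· + n))
      + nsc (primeF n f 0) (primeG n g 1) (X ∪ Y.image (· + n))
      + nsc (primeF n f 1) (primeG n g 0) (X ∪ Y.image (· + n))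
      - nsc (primeF n f 1) (primeG n g 1) (X ∪ Y.image (· + n)) := by
  simp only [nsc, nsc2, sum_powerset_union_image_add hX, ← sum_add_distrib, ← sum_sub_distrib]
  refine sum_congr rfl fun A hA => sum_congr rfl fun C _ => ?_
  rw [mem_powerset] at hA
  have hAn : A ⊆ range n := hA.trans hX
  have hXAn : X \ A ⊆ range n := sdiff_subset.trans hX
  rw [union_image_add_sdiff hX hA, Isgn_union_image_add hAn hXAn]
  simp only [primeF, primeG, lowPart_union_image_add hAn, highPart_union_image_add hAn,
    lowPart_union_image_add hXAn, highPart_union_image_add hXAn]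
  linear_combination (-(Isgn A (X \ A) * Isgn C (Y \ C))) *
    parity_split_mul_neg_one_pow (f A C) (g (X \ A) (Y \ C)) #C #(X \ A)

theorem nsc2_parity_split (n : ℕ) (f g : Finset ℕ → Finset ℕ → ℤ)
    (X Y : Finset ℕ) (hX : X ⊆ Finset.range n) (hY : Y ⊆ Finset.range n) :
    nsc2 f g X Y =
      nsc (primeF n f 0) (primeG n g 0) (X ∪ Y.image (· + n))
      + nsc (primeF n f 0) (primeG n g 1) (X ∪ Y.image (· + n))
      + nsc (primeF n f 1) (primeG n g 0) (X ∪ Y.image (· + n))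
      - nsc (primeF n f 1) (primeG n g 1) (X ∪ Y.image (· + n)) :=
  nsc2_parity_split_general n f g X Y hX
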